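/- Let M : A → Herm(m) be a continuous map from a Borel set A ⊂ ℝ³ into the m×m Hermitian matrices with 0 ≤ M_ξ ≤ 1 for all ξ, and suppose that for every ξ ∈ A, M_ξ is neither 0 nor the identity. Then after replacing A by a subset of positive measure, there exist ε > 0 and continuous unit-vector-valued maps v, v' : A → ℂ^m such that 0 ≤ M_ξ + t v(ξ)v(ξ)* − t' v'(ξ)v'(ξ)* ≤ 1 for all ξ ∈ A and all t, t' ∈ [0, ε). -/

import Mathlib

noncomputable section
open MeasureTheory Complex ComplexOrder

abbrev E3 := EuclideanSpace ℝ (Fin 3)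

namespace ChargeTransferAux

open Matrix

variable {m : ℕ}

lemma herm_smul {A : Matrix (Fin m) (Fin m) ℂ} (hA : A.IsHermitian) (c : ℝ) :
    ((c : ℝ) • A).IsHermitian := by
  unfold Matrix.IsHermitian
  rw [Matrix.conjTranspose_smul, star_trivial, hA.eq]

/-- Real nonnegative scalar multiple of a PSD matrix is PSD. -/
lemma psd_smul {A : Matrix (Fin m) (Fin m) ℂ} (hA : A.PosSemidef) {c : ℝ} (hc : 0 ≤ c) :
    ((c : ℝ) • A).PosSemidef := by
  refine Matrix.posSemidef_iff_dotProduct_mulVec.mpr ⟨herm_smul hA.1 c, fun x => ?_⟩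
  rw [Matrix.smul_mulVec, dotProduct_smul]
  have h : (c:ℝ) • (star x ⬝ᵥ A *ᵥ x) = (c:ℂ) * (star x ⬝ᵥ A *ᵥ x) := Complex.real_smul
  rw [h]
  exact mul_nonneg (by exact_mod_cast hc) (hA.dotProduct_mulVec_nonneg x)

/-- `P` PSD and `1 - P` PSD imply `P - P * P` PSD. -/
lemma psd_sub_sq {P : Matrix (Fin m) (Fin m) ℂ} (hP : P.PosSemidef)
    (h1P : (1 - P).PosSemidef) : (P - P * P).PosSemidef := by
  obtain ⟨S, hSH, hSS⟩ : ∃ S : Matrix (Fin m) (Fin m) ℂ, S.IsHermitian ∧ S * S = P := by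
    open scoped MatrixOrder in
    exact ⟨CFC.sqrt P, (Matrix.nonneg_iff_posSemidef.mp (CFC.sqrt_nonneg P)).1,
      CFC.sqrt_mul_sqrt_self P (Matrix.nonneg_iff_posSemidef.mpr hP)⟩
  have key := h1P.mul_mul_conjTranspose_same S
  rw [hSH.eq] at key
  convert key using 1
  have h2 : S * (S * S) * S
      = (S * S) * (S * S) := by noncomm_ring
  rw [hSS] at h2
  rw [Matrix.mul_sub, Matrix.mul_one, Matrix.sub_mul, h2, hSS]

/-- A PSD matrix with vanishing diagonal is zero. -/
lemma psd_diag_zero {N : Matrix (Fin m) (Fin m) ℂ} (hN : N.PosSemidef)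
    (h : ∀ i, N i i = 0) : N = 0 := by
  obtain ⟨B, hBN⟩ : ∃ B : Matrix (Fin m) (Fin m) ℂ, N = Bᴴ * B := by
    open scoped MatrixOrder in
    obtain ⟨B, hB'⟩ := CStarAlgebra.nonneg_iff_eq_star_mul_self.mp
      (Matrix.nonneg_iff_posSemidef.mpr hN)
    exact ⟨B, hB'⟩
  subst hBN
  have hB : B = 0 := by
    ext k i
    have hsum := h i
    rw [Matrix.mul_apply] at hsum
    have hterm : ∀ j, Bᴴ i j * B j i = ((‖B j i‖^2 : ℝ) : ℂ) := by
      intro j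
      rw [Matrix.conjTranspose_apply, RCLike.star_def, mul_comm, Complex.mul_conj]
      norm_cast
      rw [Complex.normSq_eq_norm_sq]
    rw [Finset.sum_congr rfl (fun j _ => hterm j)] at hsum
    have hre : ∑ j, (‖B j i‖^2 : ℝ) = 0 := by exact_mod_cast hsum
    have hz : ‖B k i‖^2 = 0 :=
      (Finset.sum_eq_zero_iff_of_nonneg (fun j _ => sq_nonneg ‖B j i‖)).mp hre k (Finset.mem_univ k)
    simpa using pow_eq_zero_iff (n := 2) (by norm_num) |>.mp hz
  rw [hB]; simp

lemma vmv_herm (v : Fin m → ℂ) : (vecMulVec v (star v)).IsHermitian := by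
  ext i j
  simp [Matrix.conjTranspose_apply, vecMulVec_apply, mul_comm]

lemma vmv_psd (v : Fin m → ℂ) : (vecMulVec v (star v)).PosSemidef := by
  refine Matrix.posSemidef_iff_dotProduct_mulVec.mpr ⟨vmv_herm v, fun x => ?_⟩
  have h : star x ⬝ᵥ (vecMulVec v (star v)) *ᵥ x
      = star (star v ⬝ᵥ x) * (star v ⬝ᵥ x) := by
    simp only [dotProduct, mulVec, vecMulVec_apply, Finset.mul_sum, Finset.sum_mul,
      Pi.star_apply, star_sum, star_mul']
    rw [Finset.sum_comm]
    apply Finset.sum_congr rfl; intro i _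
    apply Finset.sum_congr rfl; intro j _
    simp [mul_comm, mul_left_comm, mul_assoc]
  rw [h]
  exact star_mul_self_nonneg _

lemma mul_vmv (A : Matrix (Fin m) (Fin m) ℂ) (v : Fin m → ℂ) :
    A * vecMulVec v (star v) * Aᴴ = vecMulVec (A *ᵥ v) (star (A *ᵥ v)) := by
  ext i j
  simp only [Matrix.mul_apply, vecMulVec_apply, mulVec, dotProduct, Matrix.conjTranspose_apply,
    Pi.star_apply, Finset.mul_sum, Finset.sum_mul, star_sum, star_mul']
  apply Finset.sum_congr rfl; intro k _
  apply Finset.sum_congr rfl; intro l _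
  ring

lemma vmv_smul (c : ℝ) (v : Fin m → ℂ) :
    vecMulVec (c • v) (star (c • v)) = (c^2 : ℝ) • vecMulVec v (star v) := by
  ext i j
  simp only [vecMulVec_apply, Pi.star_apply, Pi.smul_apply, Matrix.smul_apply,
    star_smul, star_trivial, smul_eq_mul, Complex.real_smul]
  push_cast
  ring

lemma star_dot (v : Fin m → ℂ) :
    star v ⬝ᵥ v = ((∑ i, ‖v i‖^2 : ℝ) : ℂ) := by
  push_cast
  simp only [dotProduct, Pi.star_apply, RCLike.star_def]
  apply Finset.sum_congr rfl; intro i _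
  rw [mul_comm, Complex.mul_conj]
  norm_cast
  rw [Complex.normSq_eq_norm_sq]

lemma vmv_mul_vmv (v w x y : Fin m → ℂ) :
    vecMulVec v w * vecMulVec x y = (w ⬝ᵥ x) • vecMulVec v y := by
  ext i j
  simp only [Matrix.mul_apply, vecMulVec_apply, Matrix.smul_apply, dotProduct,
    smul_eq_mul, Finset.sum_mul, Finset.mul_sum]
  apply Finset.sum_congr rfl; intro k _; ring

lemma mul_vecMulVec (A : Matrix (Fin m) (Fin m) ℂ) (v u : Fin m → ℂ) :
    A * vecMulVec v u = vecMulVec (A *ᵥ v) u := by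
  ext i j
  simp only [Matrix.mul_apply, vecMulVec_apply, mulVec, dotProduct, Finset.sum_mul]
  apply Finset.sum_congr rfl; intro k _; ring

lemma vecMulVec_mul (v u : Fin m → ℂ) (A : Matrix (Fin m) (Fin m) ℂ) :
    vecMulVec v u * A = vecMulVec v (u ᵥ* A) := by
  ext i j
  simp only [Matrix.mul_apply, vecMulVec_apply, vecMul, dotProduct, Finset.mul_sum]
  apply Finset.sum_congr rfl; intro k _; ring

/-- Core inequality for Case 1. -/
lemma case1_core {M P : Matrix (Fin m) (Fin m) ℂ} {K : ℝ} (hK : 0 < K)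
    (hM : M.PosSemidef) (h1M : (1 - M).PosSemidef) (hP : P.PosSemidef)
    (hPM : ((K : ℝ) • M - P).PosSemidef) (hP1M : ((K : ℝ) • (1 - M) - P).PosSemidef)
    {t t' : ℝ} (ht : t ∈ Set.Ico (0:ℝ) K⁻¹) (ht' : t' ∈ Set.Ico (0:ℝ) K⁻¹) :
    (M + t • P - t' • P).PosSemidef ∧ (1 - (M + t • P - t' • P)).PosSemidef := by
  obtain ⟨ht0, htK⟩ := ht
  obtain ⟨ht'0, ht'K⟩ := ht'
  rcases le_total t' t with h | h
  · have hs0 : 0 ≤ t - t' := sub_nonneg.mpr h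
    have hsK : (t - t') * K < 1 := by
      have h1 : t - t' < K⁻¹ := lt_of_le_of_lt (by linarith) htK
      calc (t - t') * K < K⁻¹ * K := by exact mul_lt_mul_of_pos_right h1 hK
        _ = 1 := inv_mul_cancel₀ hK.ne'
    constructor
    · have he : M + t • P - t' • P = M + (t - t') • P := by module
      rw [he]
      exact hM.add (psd_smul hP hs0)
    · have he : 1 - (M + t • P - t' • P)
          = (1 - (t - t') * K) • (1 - M) + (t - t') • ((K : ℝ) • (1 - M) - P) := by module
      rw [he]
      exact (psd_smul h1M (by linarith)).add (psd_smul hP1M hs0)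
  · have hs0 : 0 ≤ t' - t := sub_nonneg.mpr h
    have hsK : (t' - t) * K < 1 := by
      have h1 : t' - t < K⁻¹ := lt_of_le_of_lt (by linarith) ht'K
      calc (t' - t) * K < K⁻¹ * K := by exact mul_lt_mul_of_pos_right h1 hK
        _ = 1 := inv_mul_cancel₀ hK.ne'
    constructor
    · have he : M + t • P - t' • P
          = (1 - (t' - t) * K) • M + (t' - t) • ((K : ℝ) • M - P) := by module
      rw [he]
      exact (psd_smul hM (by linarith)).add (psd_smul hPM hs0)
    · have he : 1 - (M + t • P - t' • P) = (1 - M) + (t' - t) • P := by module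
      rw [he]
      exact h1M.add (psd_smul hP hs0)

/-- A hermitian idempotent dominates `w w*` for any unit vector `w` it fixes. -/
lemma proj_dominates {M : Matrix (Fin m) (Fin m) ℂ} (hH : M.IsHermitian)
    (hidem : M * M = M) {w : Fin m → ℂ} (hw : M *ᵥ w = w) (hwn : star w ⬝ᵥ w = 1) :
    (M - vecMulVec w (star w)).PosSemidef := by
  set Q := vecMulVec w (star w) with hQ
  have hMQ : M * Q = Q := by rw [hQ, mul_vecMulVec, hw]
  have hQM : Q * M = Q := by
    have hsw : star w ᵥ* M = star w := by
      conv_lhs => rw [← hH.eq]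
      rw [← Matrix.star_mulVec, hw]
    rw [hQ, vecMulVec_mul, hsw]
  have hQQ : Q * Q = Q := by
    rw [hQ, vmv_mul_vmv, hwn, one_smul]
  have hD : (M - Q) * (M - Q) = M - Q := by
    have h : (M - Q) * (M - Q) = M * M - M * Q - Q * M + Q * Q := by noncomm_ring
    rw [h, hidem, hMQ, hQM, hQQ]
    abel
  have hDH : (M - Q).IsHermitian := hH.sub (vmv_herm w)
  have h : M - Q = (M - Q)ᴴ * (M - Q) := by rw [hDH.eq, hD]
  rw [h]
  exact Matrix.posSemidef_conjTranspose_mul_self _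

/-- Core inequality for Case 2 (projector case). -/
lemma case2_core {M : Matrix (Fin m) (Fin m) ℂ} (hM : M.PosSemidef)
    (hidem : M * M = M) {v v' : Fin m → ℂ}
    (hv : M *ᵥ v = 0) (hv' : M *ᵥ v' = v')
    (hvn : star v ⬝ᵥ v = 1) (hv'n : star v' ⬝ᵥ v' = 1)
    {t t' : ℝ} (ht : t ∈ Set.Ico (0:ℝ) 1) (ht' : t' ∈ Set.Ico (0:ℝ) 1) :
    (M + t • vecMulVec v (star v) - t' • vecMulVec v' (star v')).PosSemidef ∧
    (1 - (M + t • vecMulVec v (star v) - t' • vecMulVec v' (star v'))).PosSemidef := by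
  obtain ⟨ht0, ht1⟩ := ht
  obtain ⟨ht'0, ht'1⟩ := ht'
  have h1 : (M - vecMulVec v' (star v')).PosSemidef := proj_dominates hM.1 hidem hv' hv'n
  have hidem' : (1 - M) * (1 - M) = 1 - M := by
    have h : (1 - M) * (1 - M) = 1 - M - M + M * M := by noncomm_ring
    rw [h, hidem]; abel
  have hv1 : (1 - M) *ᵥ v = v := by
    rw [Matrix.sub_mulVec, Matrix.one_mulVec, hv, sub_zero]
  have h2 : ((1 - M) - vecMulVec v (star v)).PosSemidef :=
    proj_dominates (isHermitian_one.sub hM.1) hidem' hv1 hvn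
  constructor
  · have he : M + t • vecMulVec v (star v) - t' • vecMulVec v' (star v')
        = (M - vecMulVec v' (star v')) + (1 - t') • vecMulVec v' (star v')
          + t • vecMulVec v (star v) := by module
    rw [he]
    exact (h1.add (psd_smul (vmv_psd v') (by linarith))).add (psd_smul (vmv_psd v) ht0)
  · have he : 1 - (M + t • vecMulVec v (star v) - t' • vecMulVec v' (star v'))
        = ((1 - M) - vecMulVec v (star v)) + (1 - t) • vecMulVec v (star v)
          + t' • vecMulVec v' (star v') := by module
    rw [he]
    exact (h2.add (psd_smul (vmv_psd v) (by linarith))).add (psd_smul (vmv_psd v') ht'0)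

/-- In a set of positive measure there is a point all whose neighborhoods meet the set
in positive measure. -/
lemma exists_density {s : Set E3} (hs : 0 < volume s) :
    ∃ x ∈ s, ∀ r > 0, 0 < volume (s ∩ Metric.ball x r) := by
  by_contra h
  push_neg at h
  have h' : ∀ x ∈ s, ∃ r > 0, volume (s ∩ Metric.ball x r) = 0 := by
    intro x hx
    obtain ⟨r, hr, hv⟩ := h x hx
    exact ⟨r, hr, le_antisymm hv zero_le⟩
  choose! r hr hv using h'
  obtain ⟨t, hts, htc, hcov⟩ := TopologicalSpace.countable_cover_nhdsWithin
    (f := fun x => Metric.ball x (r x)) (s := s)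
    (fun x hx => mem_nhdsWithin_of_mem_nhds (Metric.ball_mem_nhds x (hr x hx)))
  have hsub : s ⊆ ⋃ x ∈ t, s ∩ Metric.ball x (r x) := by
    intro y hy
    obtain ⟨x, hxt, hyx⟩ := Set.mem_iUnion₂.mp (hcov hy)
    exact Set.mem_iUnion₂.mpr ⟨x, hxt, hy, hyx⟩
  have hnull : volume (⋃ x ∈ t, s ∩ Metric.ball x (r x)) = 0 :=
    (measure_biUnion_null_iff htc).mpr (fun x hxt => hv x (hts hxt))
  exact absurd (le_trans (measure_mono hsub) hnull.le) (by simpa using hs.ne')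

lemma meas_of_continuousOn {α : Type*} [TopologicalSpace α] [MeasurableSpace α] [T1Space α]
    [OpensMeasurableSpace α]
    {f : E3 → α} {A : Set E3} (hA : MeasurableSet A) (hf : ContinuousOn f A) (a : α) :
    MeasurableSet {ξ | ξ ∈ A ∧ f ξ = a} := by
  have hF : Continuous (A.restrict f) := hf.restrict
  have hT : MeasurableSet (A.restrict f ⁻¹' {a}) :=
    (isClosed_singleton.preimage hF).measurableSet
  have he : {ξ | ξ ∈ A ∧ f ξ = a} = Subtype.val '' (A.restrict f ⁻¹' {a}) := by
    ext x
    constructor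
    · rintro ⟨hxA, hfx⟩
      exact ⟨⟨x, hxA⟩, by simpa [Set.restrict] using hfx, rfl⟩
    · rintro ⟨⟨y, hyA⟩, hy, rfl⟩
      exact ⟨hyA, by simpa [Set.restrict] using hy⟩
  rw [he]
  exact hA.subtype_image hT

lemma norm_normalize {u : Fin m → ℂ} (hg : 0 < ∑ i, ‖u i‖^2) :
    ∑ i, ‖((Real.sqrt (∑ i, ‖u i‖^2))⁻¹ • u) i‖^2 = 1 := by
  set g := ∑ i, ‖u i‖^2 with hgdef
  have hs : 0 < Real.sqrt g := Real.sqrt_pos.mpr hg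
  have h : ∀ i, ‖((Real.sqrt g)⁻¹ • u) i‖^2 = (Real.sqrt g)⁻¹^2 * ‖u i‖^2 := by
    intro i
    rw [Pi.smul_apply, norm_smul, Real.norm_eq_abs, abs_of_pos (inv_pos.mpr hs), mul_pow]
  rw [Finset.sum_congr rfl (fun i _ => h i), ← Finset.mul_sum, ← hgdef,
    inv_pow, Real.sq_sqrt hg.le, inv_mul_cancel₀ hg.ne']

lemma cont_normalize {u : E3 → Fin m → ℂ} {s : Set E3}
    (hu : ∀ i, ContinuousOn (fun ξ => u ξ i) s)
    (hg : ∀ ξ ∈ s, (0:ℝ) < ∑ i, ‖u ξ i‖^2) :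
    ContinuousOn (fun ξ => (Real.sqrt (∑ i, ‖u ξ i‖^2))⁻¹ • u ξ) s := by
  have hgc : ContinuousOn (fun ξ => ∑ i, ‖u ξ i‖^2) s :=
    continuousOn_finset_sum _ (fun i _ => ((hu i).norm).pow 2)
  have hscal : ContinuousOn (fun ξ => (Real.sqrt (∑ i, ‖u ξ i‖^2))⁻¹) s := by
    apply ContinuousOn.inv₀ (Real.continuous_sqrt.comp_continuousOn hgc)
    intro ξ hξ
    exact (Real.sqrt_pos.mpr (hg ξ hξ)).ne'
  exact hscal.smul (continuousOn_pi.mpr hu)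

lemma one_sub_single_psd (i₀ : Fin m) :
    ((1 : Matrix (Fin m) (Fin m) ℂ)
      - vecMulVec (Pi.single i₀ 1) (star (Pi.single i₀ 1))).PosSemidef := by
  have hd : (1 : Matrix (Fin m) (Fin m) ℂ)
      - vecMulVec (Pi.single i₀ 1) (star (Pi.single i₀ 1))
      = Matrix.diagonal (fun j => if j = i₀ then 0 else 1) := by
    ext i j
    by_cases hij : i = j
    · subst hij
      by_cases hi : i = i₀ <;>
        simp [Matrix.one_apply, vecMulVec_apply, Matrix.diagonal_apply, Pi.single_apply, hi]
    · by_cases hi : i = i₀ <;> by_cases hj : j = i₀ <;>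
        simp_all [Matrix.one_apply, vecMulVec_apply, Matrix.diagonal_apply, Pi.single_apply]
  rw [hd]
  refine Matrix.PosSemidef.diagonal ?_
  intro j
  by_cases hj : j = i₀ <;> simp [hj]

end ChargeTransferAux

open ChargeTransferAux Matrix

/-- Let `M : A → Herm(m)` be continuous on a Borel set `A ⊂ ℝ³` of
positive measure, with `0 ≤ M_ξ ≤ 1`, and suppose `M_ξ` is neither `0` nor the identity
for every `ξ ∈ A`.  Then, after replacing `A` by a subset of positive measure, there are
`ε > 0` and continuous unit-vector fields `v, v'` with
`0 ≤ M_ξ + t v(ξ)v(ξ)* − t' v'(ξ)v'(ξ)* ≤ 1` for all `ξ` and `t, t' ∈ [0,ε)`. -/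
theorem matrix_charge_transfer_directions
    (m : ℕ) (hm : 0 < m)
    (A : Set E3) (hA : MeasurableSet A) (hApos : 0 < volume A)
    (M : E3 → Matrix (Fin m) (Fin m) ℂ)
    (hMcont : ContinuousOn M A)
    (hherm : ∀ ξ ∈ A, (M ξ).IsHermitian)
    (hpos : ∀ ξ ∈ A, (M ξ).PosSemidef)
    (hle1 : ∀ ξ ∈ A, (1 - M ξ).PosSemidef)
    (hne0 : ∀ ξ ∈ A, M ξ ≠ 0)
    (hne1 : ∀ ξ ∈ A, M ξ ≠ 1) :
    ∃ A' ⊆ A, MeasurableSet A' ∧ 0 < volume A' ∧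
    ∃ ε > (0:ℝ), ∃ v v' : E3 → Fin m → ℂ,
      ContinuousOn v A' ∧ ContinuousOn v' A' ∧
      (∀ ξ ∈ A', (∑ i, ‖v ξ i‖ ^ 2) = 1 ∧ (∑ i, ‖v' ξ i‖ ^ 2) = 1) ∧
      (∀ ξ ∈ A', ∀ t ∈ Set.Ico (0:ℝ) ε, ∀ t' ∈ Set.Ico (0:ℝ) ε,
        (M ξ + t • Matrix.vecMulVec (v ξ) (star (v ξ)) -
          t' • Matrix.vecMulVec (v' ξ) (star (v' ξ))).PosSemidef ∧
        (1 - (M ξ + t • Matrix.vecMulVec (v ξ) (star (v ξ)) -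
          t' • Matrix.vecMulVec (v' ξ) (star (v' ξ)))).PosSemidef) := by
  classical
  have hMentry : ∀ i j : Fin m, ContinuousOn (fun ξ => M ξ i j) A := by
    intro i j
    have h := ((continuous_apply j).comp (continuous_apply i)).comp_continuousOn hMcont
    exact h
  set N : E3 → Matrix (Fin m) (Fin m) ℂ := fun ξ => M ξ - M ξ * M ξ with hNdef
  have hNentry : ∀ i j : Fin m, ContinuousOn (fun ξ => N ξ i j) A := by
    intro i j
    have heq : (fun ξ => N ξ i j) = fun ξ => M ξ i j - ∑ k, M ξ i k * M ξ k j := by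
      funext ξ; simp [hNdef, Matrix.sub_apply, Matrix.mul_apply]
    rw [heq]
    exact (hMentry i j).sub (continuousOn_finset_sum _ fun k _ => (hMentry i k).mul (hMentry k j))
  have hNpsd : ∀ ξ ∈ A, (N ξ).PosSemidef := fun ξ hξ => psd_sub_sq (hpos ξ hξ) (hle1 ξ hξ)
  have hMM : ∀ ξ ∈ A, (M ξ * M ξ).PosSemidef := fun ξ hξ => by
    have h := Matrix.posSemidef_conjTranspose_mul_self (M ξ)
    rwa [(hherm ξ hξ).eq] at h
  have h1Npsd : ∀ ξ ∈ A, (1 - N ξ).PosSemidef := fun ξ hξ => by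
    have heq : 1 - N ξ = (1 - M ξ) + M ξ * M ξ := by simp only [hNdef]; abel
    rw [heq]; exact (hle1 ξ hξ).add (hMM ξ hξ)
  by_cases hB : 0 < volume {ξ | ξ ∈ A ∧ ∃ i, N ξ i i ≠ 0}
  · -- CASE 1: on a positive-measure set, `M ξ` is not a projector
    obtain ⟨ξ₀, ⟨hξ₀A, i₀, hi₀⟩, hd⟩ := exists_density hB
    set c := ‖N ξ₀ i₀ i₀‖ with hcdef
    have hc : 0 < c := norm_pos_iff.mpr hi₀
    have hev : {ξ | c/2 < ‖N ξ i₀ i₀‖} ∈ nhdsWithin ξ₀ A := by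
      have h1 : ContinuousWithinAt (fun ξ => ‖N ξ i₀ i₀‖) A ξ₀ :=
        ((hNentry i₀ i₀).norm).continuousWithinAt hξ₀A
      exact h1.eventually (eventually_gt_nhds (by linarith))
    obtain ⟨r, hr, hrsub⟩ := Metric.mem_nhdsWithin_iff.mp hev
    set δ := (c/2)^2 with hδdef
    have hδ : 0 < δ := by positivity
    set u : E3 → Fin m → ℂ := fun ξ k => N ξ k i₀ with hudef
    have hA'g : ∀ ξ ∈ A ∩ Metric.ball ξ₀ r, δ ≤ ∑ k, ‖u ξ k‖^2 := by
      rintro ξ ⟨hξA, hξb⟩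
      have hgt : c/2 < ‖N ξ i₀ i₀‖ := hrsub ⟨hξb, hξA⟩
      have hle : δ ≤ ‖u ξ i₀‖^2 := by
        have h2 : (c/2)^2 ≤ ‖N ξ i₀ i₀‖^2 :=
          pow_le_pow_left₀ (by positivity) hgt.le 2
        simpa [hudef, hδdef] using h2
      exact hle.trans (Finset.single_le_sum (f := fun k => ‖u ξ k‖^2)
        (fun k _ => sq_nonneg _) (Finset.mem_univ i₀))
    have hA'gpos : ∀ ξ ∈ A ∩ Metric.ball ξ₀ r, (0:ℝ) < ∑ k, ‖u ξ k‖^2 :=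
      fun ξ hξ => lt_of_lt_of_le hδ (hA'g ξ hξ)
    set vv : E3 → Fin m → ℂ := fun ξ => (Real.sqrt (∑ k, ‖u ξ k‖^2))⁻¹ • u ξ with hvdef
    refine ⟨A ∩ Metric.ball ξ₀ r, Set.inter_subset_left,
      hA.inter Metric.isOpen_ball.measurableSet, ?_, δ, hδ, vv, vv, ?_, ?_, ?_, ?_⟩
    · refine lt_of_lt_of_le (hd r hr) (measure_mono ?_)
      rintro x ⟨hx1, hx2⟩
      exact ⟨hx1.1, hx2⟩
    · exact cont_normalize
        (fun k => ((hNentry k i₀)).mono Set.inter_subset_left) hA'gpos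
    · exact cont_normalize
        (fun k => ((hNentry k i₀)).mono Set.inter_subset_left) hA'gpos
    · intro ξ hξ
      have h1 := norm_normalize (hA'gpos ξ hξ)
      exact ⟨h1, h1⟩
    · intro ξ hξ t ht t' ht'
      have hξA : ξ ∈ A := hξ.1
      have hgpos := hA'gpos ξ hξ
      have hgδ := hA'g ξ hξ
      have hNH : (N ξ)ᴴ = N ξ := (hNpsd ξ hξA).1
      have hUeq : u ξ = N ξ *ᵥ Pi.single i₀ 1 := by
        funext k; simp [hudef, Matrix.mulVec_single]
      have hNNU : (N ξ * N ξ - vecMulVec (u ξ) (star (u ξ))).PosSemidef := by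
        have h1 := (one_sub_single_psd i₀).mul_mul_conjTranspose_same (N ξ)
        have h2 : N ξ * ((1 : Matrix (Fin m) (Fin m) ℂ)
              - vecMulVec (Pi.single i₀ 1) (star (Pi.single i₀ 1))) * (N ξ)ᴴ
            = N ξ * N ξ - vecMulVec (u ξ) (star (u ξ)) := by
          rw [Matrix.mul_sub, Matrix.mul_one, Matrix.sub_mul, mul_vmv, ← hUeq, hNH]
        rw [h2] at h1
        exact h1
      have hN1 := psd_sub_sq (hNpsd ξ hξA) (h1Npsd ξ hξA)
      have hMNx : (M ξ - N ξ).PosSemidef := by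
        have heq : M ξ - N ξ = M ξ * M ξ := by simp only [hNdef]; abel
        rw [heq]; exact hMM ξ hξA
      have h1MNx : ((1 - M ξ) - N ξ).PosSemidef := by
        have hid : (1 - M ξ) - N ξ = (1 - M ξ) * (1 - M ξ) := by
          simp only [hNdef]; noncomm_ring
        have h := Matrix.posSemidef_conjTranspose_mul_self (1 - M ξ)
        rw [(hle1 ξ hξA).1.eq] at h
        rw [hid]; exact h
      have hMU : (M ξ - vecMulVec (u ξ) (star (u ξ))).PosSemidef := by
        have heq : M ξ - vecMulVec (u ξ) (star (u ξ))
            = (M ξ - N ξ) + (N ξ - N ξ * N ξ)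
              + (N ξ * N ξ - vecMulVec (u ξ) (star (u ξ))) := by abel
        rw [heq]; exact (hMNx.add hN1).add hNNU
      have h1MU : ((1 - M ξ) - vecMulVec (u ξ) (star (u ξ))).PosSemidef := by
        have heq : (1 - M ξ) - vecMulVec (u ξ) (star (u ξ))
            = ((1 - M ξ) - N ξ) + (N ξ - N ξ * N ξ)
              + (N ξ * N ξ - vecMulVec (u ξ) (star (u ξ))) := by abel
        rw [heq]; exact (h1MNx.add hN1).add hNNU
      have hP : vecMulVec (vv ξ) (star (vv ξ))
          = ((∑ k, ‖u ξ k‖^2)⁻¹ : ℝ) • vecMulVec (u ξ) (star (u ξ)) := by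
        rw [hvdef]
        rw [vmv_smul]
        congr 1
        rw [inv_pow, Real.sq_sqrt (Finset.sum_nonneg fun k _ => sq_nonneg _)]
      have hKg : (∑ k, ‖u ξ k‖^2)⁻¹ ≤ δ⁻¹ := inv_anti₀ hδ hgδ
      have hginv : (0:ℝ) ≤ (∑ k, ‖u ξ k‖^2)⁻¹ := inv_nonneg.mpr hgpos.le
      have hKM : ((δ⁻¹ : ℝ) • M ξ - vecMulVec (vv ξ) (star (vv ξ))).PosSemidef := by
        rw [hP]
        have heq : (δ⁻¹ : ℝ) • M ξ
              - ((∑ k, ‖u ξ k‖^2)⁻¹ : ℝ) • vecMulVec (u ξ) (star (u ξ))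
            = (δ⁻¹ - (∑ k, ‖u ξ k‖^2)⁻¹) • M ξ
              + ((∑ k, ‖u ξ k‖^2)⁻¹ : ℝ) • (M ξ - vecMulVec (u ξ) (star (u ξ))) := by
          module
        rw [heq]
        exact (psd_smul (hpos ξ hξA) (by linarith)).add (psd_smul hMU hginv)
      have hK1M : ((δ⁻¹ : ℝ) • (1 - M ξ) - vecMulVec (vv ξ) (star (vv ξ))).PosSemidef := by
        rw [hP]
        have heq : (δ⁻¹ : ℝ) • (1 - M ξ)
              - ((∑ k, ‖u ξ k‖^2)⁻¹ : ℝ) • vecMulVec (u ξ) (star (u ξ))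
            = (δ⁻¹ - (∑ k, ‖u ξ k‖^2)⁻¹) • (1 - M ξ)
              + ((∑ k, ‖u ξ k‖^2)⁻¹ : ℝ) • ((1 - M ξ) - vecMulVec (u ξ) (star (u ξ))) := by
          module
        rw [heq]
        exact (psd_smul (hle1 ξ hξA) (by linarith)).add (psd_smul h1MU hginv)
      have htK : t ∈ Set.Ico (0:ℝ) (δ⁻¹)⁻¹ := by rwa [inv_inv]
      have ht'K : t' ∈ Set.Ico (0:ℝ) (δ⁻¹)⁻¹ := by rwa [inv_inv]
      exact case1_core (inv_pos.mpr hδ) (hpos ξ hξA) (hle1 ξ hξA) (vmv_psd (vv ξ))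
        hKM hK1M htK ht'K
  · -- CASE 2: `M ξ` is a projector a.e. on a positive-measure set
    set C : Set E3 := {ξ | ξ ∈ A ∧ N ξ = 0} with hCdef
    have hCpos : 0 < volume C := by
      have hcover : A ⊆ {ξ | ξ ∈ A ∧ ∃ i, N ξ i i ≠ 0} ∪ C := by
        intro ξ hξ
        by_cases h : ∃ i, N ξ i i ≠ 0
        · exact Or.inl ⟨hξ, h⟩
        · push_neg at h
          exact Or.inr ⟨hξ, psd_diag_zero (hNpsd ξ hξ) h⟩
      by_contra hC
      have hB0 : volume {ξ | ξ ∈ A ∧ ∃ i, N ξ i i ≠ 0} = 0 := by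
        simpa using hB
      have hC0 : volume C = 0 := by simpa using hC
      have : volume A ≤ 0 := by
        calc volume A ≤ volume ({ξ | ξ ∈ A ∧ ∃ i, N ξ i i ≠ 0} ∪ C) := measure_mono hcover
          _ ≤ volume {ξ | ξ ∈ A ∧ ∃ i, N ξ i i ≠ 0} + volume C := measure_union_le _ _
          _ = 0 := by rw [hB0, hC0, add_zero]
      exact absurd (le_antisymm this zero_le) hApos.ne'
    have hCmeas : MeasurableSet C := by
      have hfc : ContinuousOn (fun ξ => (fun i j => N ξ i j : Fin m → Fin m → ℂ)) A :=
        continuousOn_pi.mpr fun i => continuousOn_pi.mpr fun j => hNentry i j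
      have h := meas_of_continuousOn hA hfc 0
      have he : C = {ξ | ξ ∈ A ∧ (fun i j => N ξ i j : Fin m → Fin m → ℂ) = 0} := by
        ext ξ
        constructor
        · rintro ⟨h1, h2⟩
          exact ⟨h1, by funext i j; simp [h2]⟩
        · rintro ⟨h1, h2⟩
          exact ⟨h1, by ext i j; exact congrFun (congrFun h2 i) j⟩
      rw [he]
      exact h
    obtain ⟨ξ₀, ⟨hξ₀A, hN₀⟩, hd⟩ := exists_density hCpos
    have hproj : M ξ₀ * M ξ₀ = M ξ₀ := by
      have h : M ξ₀ - M ξ₀ * M ξ₀ = 0 := hN₀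
      exact (sub_eq_zero.mp h).symm
    -- kernel direction at ξ₀
    obtain ⟨iw, jw, hijw⟩ : ∃ i j, ((1 : Matrix (Fin m) (Fin m) ℂ) - M ξ₀) i j ≠ 0 := by
      by_contra h
      push_neg at h
      apply hne1 ξ₀ hξ₀A
      have : (1 : Matrix (Fin m) (Fin m) ℂ) - M ξ₀ = 0 := by
        ext i j; simpa using h i j
      have := sub_eq_zero.mp this
      exact this.symm
    set w : Fin m → ℂ := fun k => ((1 : Matrix (Fin m) (Fin m) ℂ) - M ξ₀) k jw with hwdef
    have hw0 : M ξ₀ *ᵥ w = 0 := by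
      have hw : w = ((1 : Matrix (Fin m) (Fin m) ℂ) - M ξ₀) *ᵥ Pi.single jw 1 := by
        funext k; simp [hwdef, Matrix.mulVec_single]
      rw [hw, Matrix.mulVec_mulVec]
      have h : M ξ₀ * ((1 : Matrix (Fin m) (Fin m) ℂ) - M ξ₀) = 0 := by
        rw [Matrix.mul_sub, Matrix.mul_one, hproj, sub_self]
      rw [h, Matrix.zero_mulVec]
    have hwpos : 0 < ∑ k, ‖w k‖^2 := by
      have h1 : 0 < ‖w iw‖^2 := by
        have hne : w iw ≠ 0 := hijw
        exact pow_pos (norm_pos_iff.mpr hne) 2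
      exact lt_of_lt_of_le h1 (Finset.single_le_sum (f := fun k => ‖w k‖^2)
        (fun k _ => sq_nonneg _) (Finset.mem_univ iw))
    set v₀ : Fin m → ℂ := (Real.sqrt (∑ k, ‖w k‖^2))⁻¹ • w with hv₀def
    have hv₀unit : ∑ k, ‖v₀ k‖^2 = 1 := norm_normalize hwpos
    have hv₀ker : M ξ₀ *ᵥ v₀ = 0 := by
      rw [hv₀def, Matrix.mulVec_smul, hw0, smul_zero]
    -- range direction at ξ₀
    obtain ⟨iw', jw', hijw'⟩ : ∃ i j, M ξ₀ i j ≠ 0 := by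
      by_contra h
      push_neg at h
      apply hne0 ξ₀ hξ₀A
      ext i j; simpa using h i j
    set w' : Fin m → ℂ := fun k => M ξ₀ k jw' with hw'def
    have hw'fix : M ξ₀ *ᵥ w' = w' := by
      have hw' : w' = M ξ₀ *ᵥ Pi.single jw' 1 := by
        funext k; simp [hw'def, Matrix.mulVec_single]
      rw [hw', Matrix.mulVec_mulVec, hproj]
    have hw'pos : 0 < ∑ k, ‖w' k‖^2 := by
      have h1 : 0 < ‖w' iw'‖^2 := by
        have hne : w' iw' ≠ 0 := hijw'
        exact pow_pos (norm_pos_iff.mpr hne) 2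
      exact lt_of_lt_of_le h1 (Finset.single_le_sum (f := fun k => ‖w' k‖^2)
        (fun k _ => sq_nonneg _) (Finset.mem_univ iw'))
    set v₀' : Fin m → ℂ := (Real.sqrt (∑ k, ‖w' k‖^2))⁻¹ • w' with hv₀'def
    have hv₀'unit : ∑ k, ‖v₀' k‖^2 = 1 := norm_normalize hw'pos
    have hv₀'fix : M ξ₀ *ᵥ v₀' = v₀' := by
      rw [hv₀'def, Matrix.mulVec_smul, hw'fix]
    -- moving vectors
    set u : E3 → Fin m → ℂ := fun ξ => v₀ - M ξ *ᵥ v₀ with hudef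
    set u' : E3 → Fin m → ℂ := fun ξ => M ξ *ᵥ v₀' with hu'def
    have huentry : ∀ k, ContinuousOn (fun ξ => u ξ k) A := by
      intro k
      have heq : (fun ξ => u ξ k) = fun ξ => v₀ k - ∑ l, M ξ k l * v₀ l := by
        funext ξ; simp [hudef, Matrix.mulVec, dotProduct]
      rw [heq]
      exact continuousOn_const.sub
        (continuousOn_finset_sum _ fun l _ => (hMentry k l).mul continuousOn_const)
    have hu'entry : ∀ k, ContinuousOn (fun ξ => u' ξ k) A := by
      intro k
      have heq : (fun ξ => u' ξ k) = fun ξ => ∑ l, M ξ k l * v₀' l := by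
        funext ξ; simp [hu'def, Matrix.mulVec, dotProduct]
      rw [heq]
      exact continuousOn_finset_sum _ fun l _ => (hMentry k l).mul continuousOn_const
    have hu0 : u ξ₀ = v₀ := by rw [hudef]; simp [hv₀ker]
    have hu'0 : u' ξ₀ = v₀' := by rw [hu'def]; simp [hv₀'fix]
    have hgc : ContinuousOn (fun ξ => ∑ k, ‖u ξ k‖^2) A :=
      continuousOn_finset_sum _ (fun k _ => ((huentry k).norm).pow 2)
    have hg'c : ContinuousOn (fun ξ => ∑ k, ‖u' ξ k‖^2) A :=
      continuousOn_finset_sum _ (fun k _ => ((hu'entry k).norm).pow 2)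
    have hg0 : (∑ k, ‖u ξ₀ k‖^2) = 1 := by rw [hu0]; exact hv₀unit
    have hg'0 : (∑ k, ‖u' ξ₀ k‖^2) = 1 := by rw [hu'0]; exact hv₀'unit
    have hev : {ξ | (1:ℝ)/2 < ∑ k, ‖u ξ k‖^2 ∧ (1:ℝ)/2 < ∑ k, ‖u' ξ k‖^2}
        ∈ nhdsWithin ξ₀ A := by
      have h1 : ContinuousWithinAt (fun ξ => ∑ k, ‖u ξ k‖^2) A ξ₀ :=
        hgc.continuousWithinAt hξ₀A
      have h2 : ContinuousWithinAt (fun ξ => ∑ k, ‖u' ξ k‖^2) A ξ₀ :=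
        hg'c.continuousWithinAt hξ₀A
      have e1 := h1.eventually (eventually_gt_nhds (by rw [hg0]; norm_num : (1:ℝ)/2 < ∑ k, ‖u ξ₀ k‖^2))
      have e2 := h2.eventually (eventually_gt_nhds (by rw [hg'0]; norm_num : (1:ℝ)/2 < ∑ k, ‖u' ξ₀ k‖^2))
      exact e1.and e2
    obtain ⟨r, hr, hrsub⟩ := Metric.mem_nhdsWithin_iff.mp hev
    set A' := C ∩ Metric.ball ξ₀ r with hA'def
    have hA'subA : A' ⊆ A := fun x hx => hx.1.1
    have hA'g : ∀ ξ ∈ A', (1:ℝ)/2 < ∑ k, ‖u ξ k‖^2 ∧ (1:ℝ)/2 < ∑ k, ‖u' ξ k‖^2 := by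
      rintro ξ ⟨hξC, hξb⟩
      exact hrsub ⟨hξb, hξC.1⟩
    have hA'gpos : ∀ ξ ∈ A', (0:ℝ) < ∑ k, ‖u ξ k‖^2 :=
      fun ξ hξ => lt_trans (by norm_num) (hA'g ξ hξ).1
    have hA'g'pos : ∀ ξ ∈ A', (0:ℝ) < ∑ k, ‖u' ξ k‖^2 :=
      fun ξ hξ => lt_trans (by norm_num) (hA'g ξ hξ).2
    set vf : E3 → Fin m → ℂ := fun ξ => (Real.sqrt (∑ k, ‖u ξ k‖^2))⁻¹ • u ξ with hvfdef
    set vf' : E3 → Fin m → ℂ := fun ξ => (Real.sqrt (∑ k, ‖u' ξ k‖^2))⁻¹ • u' ξ with hvf'def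
    refine ⟨A', hA'subA, hCmeas.inter Metric.isOpen_ball.measurableSet, ?_,
      1, one_pos, vf, vf', ?_, ?_, ?_, ?_⟩
    · exact hd r hr
    · exact cont_normalize (fun k => (huentry k).mono hA'subA)
        (fun ξ hξ => hA'gpos ξ hξ)
    · exact cont_normalize (fun k => (hu'entry k).mono hA'subA)
        (fun ξ hξ => hA'g'pos ξ hξ)
    · intro ξ hξ
      exact ⟨norm_normalize (hA'gpos ξ hξ), norm_normalize (hA'g'pos ξ hξ)⟩
    · intro ξ hξ t ht t' ht'
      have hξA : ξ ∈ A := hA'subA hξ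
      have hNξ : N ξ = 0 := hξ.1.2
      have hidem : M ξ * M ξ = M ξ := by
        have h : M ξ - M ξ * M ξ = 0 := hNξ
        exact (sub_eq_zero.mp h).symm
      have hMu : M ξ *ᵥ u ξ = 0 := by
        rw [hudef]
        simp only
        rw [Matrix.mulVec_sub, Matrix.mulVec_mulVec, hidem, sub_self]
      have hMu' : M ξ *ᵥ u' ξ = u' ξ := by
        rw [hu'def]
        simp only
        rw [Matrix.mulVec_mulVec, hidem]
      have hMv : M ξ *ᵥ vf ξ = 0 := by
        rw [hvfdef]
        simp only
        rw [Matrix.mulVec_smul, hMu, smul_zero]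
      have hMv' : M ξ *ᵥ vf' ξ = vf' ξ := by
        rw [hvf'def]
        simp only
        rw [Matrix.mulVec_smul, hMu']
      have hvunit : star (vf ξ) ⬝ᵥ vf ξ = 1 := by
        rw [star_dot]
        rw [show (∑ i, ‖vf ξ i‖^2) = 1 from norm_normalize (hA'gpos ξ hξ)]
        norm_num
      have hv'unit : star (vf' ξ) ⬝ᵥ vf' ξ = 1 := by
        rw [star_dot]
        rw [show (∑ i, ‖vf' ξ i‖^2) = 1 from norm_normalize (hA'g'pos ξ hξ)]
        norm_num
      exact case2_core (hpos ξ hξA) hidem hMv hMv' hvunit hv'unit ht ht'
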